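/- arXiv:1703.09609 — 9 statements merged into one kernel-verified Lean document; each statement's English description precedes it below -/
import Mathlib

section
/- Let k be a field of characteristic 2 and let D be the k-derivation of k(x,y) given by D = (1/x^5)·((x y^6 + x^3) ∂/∂x + (x^6 + y^7 + x^2 y) ∂/∂y). Then D∘D = 0. -/
open MvPolynomial

/-- `D = (1/x⁵)((xy⁶+x³)∂/∂x + (x⁶+y⁷+x²y)∂/∂y)` on `k(x,y)` in characteristic 2
satisfies `D ∘ D = 0`. -/
theorem derivation_E8_supersingular_additive (k : Type*) [Field k] [CharP k 2]
    (K : Type*) [Field K] [Algebra (MvPolynomial (Fin 2) k) K]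
    [IsFractionRing (MvPolynomial (Fin 2) k) K]
    [Algebra k K] [IsScalarTower k (MvPolynomial (Fin 2) k) K]
    (x y : K)
    (hx : x = algebraMap (MvPolynomial (Fin 2) k) K (X 0))
    (hy : y = algebraMap (MvPolynomial (Fin 2) k) K (X 1))
    (D : Derivation k K K)
    (hDx : D x = (x * y ^ 6 + x ^ 3) / x ^ 5)
    (hDy : D y = (x ^ 6 + y ^ 7 + x ^ 2 * y) / x ^ 5) :
    ∀ z : K, D (D z) = 0 := by
  haveI : CharP K 2 := charP_of_injective_algebraMap (algebraMap k K).injective 2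
  have h2 : (2 : K) = 0 := by exact_mod_cast CharP.cast_eq_zero K 2
  have hx0 : x ≠ 0 := by
    rw [hx]
    exact (map_ne_zero_iff _ (IsFractionRing.injective _ K)).mpr (MvPolynomial.X_ne_zero 0)
  -- squares are killed by D in characteristic 2
  have hsq : ∀ z : K, D (z ^ 2) = 0 := by
    intro z
    rw [pow_two, Derivation.leibniz]
    simp only [smul_eq_mul]
    linear_combination (z * D z) * h2
  have hx2 : D (x ^ 2) = 0 := hsq x
  have hx4 : D (x ^ 4) = 0 := by
    have := hsq (x ^ 2); rw [show (x ^ 2) ^ 2 = x ^ 4 by ring] at this; exact this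
  have hx6 : D (x ^ 6) = 0 := by
    have := hsq (x ^ 3); rw [show (x ^ 3) ^ 2 = x ^ 6 by ring] at this; exact this
  have hy6 : D (y ^ 6) = 0 := by
    have := hsq (y ^ 3); rw [show (y ^ 3) ^ 2 = y ^ 6 by ring] at this; exact this
  -- key identity for second derivatives of products
  have key : ∀ u v : K, D (D (u * v)) = u * D (D v) + v * D (D u) := by
    intro u v
    have h1 : D (u * v) = u * D v + v * D u := by
      rw [Derivation.leibniz]; simp only [smul_eq_mul]
    rw [h1, map_add, Derivation.leibniz, Derivation.leibniz]
    simp only [smul_eq_mul]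
    linear_combination (D u * D v) * h2
  -- polynomial forms of the derivation equations
  have ha : D x * x ^ 4 = y ^ 6 + x ^ 2 := by
    rw [hDx]
    field_simp
  have hb : D y * x ^ 5 = x ^ 6 + y ^ 7 + x ^ 2 * y := by
    rw [hDy]
    field_simp
  -- D (D x) = 0
  have hDDx : D (D x) = 0 := by
    have h := congrArg D ha
    rw [Derivation.leibniz] at h
    simp only [smul_eq_mul] at h
    rw [map_add, hx2, hy6, hx4] at h
    have h5 : x ^ 4 * D (D x) = 0 := by linear_combination h
    rcases mul_eq_zero.mp h5 with h' | h'
    · exact absurd h' (pow_ne_zero _ hx0)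
    · exact h'
  -- D (D y) = 0
  have hDDy : D (D y) = 0 := by
    have h := congrArg D hb
    have hx5 : D (x ^ 5) = x ^ 4 * D x := by
      rw [show x ^ 5 = x ^ 4 * x by ring, Derivation.leibniz, hx4]
      simp only [smul_eq_mul]
      ring
    have hy7 : D (y ^ 7) = y ^ 6 * D y := by
      rw [show y ^ 7 = y ^ 6 * y by ring, Derivation.leibniz, hy6]
      simp only [smul_eq_mul]
      ring
    have hx2y : D (x ^ 2 * y) = x ^ 2 * D y := by
      rw [Derivation.leibniz, hx2]
      simp only [smul_eq_mul]
      ring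
    rw [Derivation.leibniz] at h
    simp only [smul_eq_mul] at h
    rw [map_add, map_add, hx5, hx6, hy7, hx2y] at h
    have h5 : x ^ 5 * D (D y) = 0 := by linear_combination h - D y * ha
    rcases mul_eq_zero.mp h5 with h' | h'
    · exact absurd h' (pow_ne_zero _ hx0)
    · exact h'
  -- second derivative vanishes on the subalgebra generated by x and y
  have hS : ∀ w ∈ Algebra.adjoin k ({x, y} : Set K), D (D w) = 0 := by
    intro w hw
    induction hw using Algebra.adjoin_induction with
    | mem a ha' =>
      rcases ha' with h' | h'
      · rw [h']; exact hDDx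
      · rw [Set.mem_singleton_iff.mp h']; exact hDDy
    | algebraMap r => rw [Derivation.map_algebraMap, map_zero]
    | add a b _ _ pa pb => rw [map_add, map_add, pa, pb, add_zero]
    | mul a b _ _ pa pb => rw [key a b, pa, pb]; ring
  -- every image of a polynomial lies in that subalgebra
  have himg : ∀ p : MvPolynomial (Fin 2) k,
      algebraMap (MvPolynomial (Fin 2) k) K p ∈ Algebra.adjoin k ({x, y} : Set K) := by
    intro p
    set f := IsScalarTower.toAlgHom k (MvPolynomial (Fin 2) k) K
    have hp : f p ∈ (Algebra.adjoin k (Set.range (X : Fin 2 → MvPolynomial (Fin 2) k))).map f :=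
      ⟨p, by simp [MvPolynomial.adjoin_range_X], rfl⟩
    rw [AlgHom.map_adjoin] at hp
    refine Algebra.adjoin_mono ?_ hp
    rintro _ ⟨_, ⟨i, rfl⟩, rfl⟩
    fin_cases i
    · exact Or.inl hx.symm
    · exact Or.inr hy.symm
  -- conclude for an arbitrary element of K
  intro z
  obtain ⟨p, q, hq, hz⟩ := IsFractionRing.div_surjective (A := MvPolynomial (Fin 2) k) z
  set a := algebraMap (MvPolynomial (Fin 2) k) K p with hadef
  set b := algebraMap (MvPolynomial (Fin 2) k) K q with hbdef
  have hb0 : b ≠ 0 :=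
    (map_ne_zero_iff _ (IsFractionRing.injective _ K)).mpr (nonZeroDivisors.ne_zero hq)
  have hzb : z * b = a := by
    rw [← hz]; field_simp
  have h1 : D (D (z * b)) = 0 := by rw [hzb]; exact hS a (himg p)
  rw [key z b, hS b (himg q)] at h1
  have h5 : b * D (D z) = 0 := by linear_combination h1
  rcases mul_eq_zero.mp h5 with h' | h'
  · exact absurd h' hb0
  · exact h'
end

section
/- Let k be a field of characteristic 2 with elements a, b ∈ k, b ≠ 0, and let D be the k-derivation of k(x,y) given by D = (1/(x^2 y^2))·(b x^3 y^2 ∂/∂x + (a x^2 y^2 + x^2 + x^4 y^4 + y^4 + b x^2 y^3) ∂/∂y). Then D∘D = b·D. -/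
open MvPolynomial

/-- `D = (1/(x²y²))(bx³y² ∂/∂x + (ax²y² + x² + x⁴y⁴ + y⁴ + bx²y³) ∂/∂y)` on `k(x,y)` in
characteristic 2, with `b ≠ 0`, satisfies `D ∘ D = b·D`. -/
theorem derivation_D4D4_pclosed (k : Type*) [Field k] [CharP k 2]
    (a b : k) (hb : b ≠ 0)
    (K : Type*) [Field K] [Algebra (MvPolynomial (Fin 2) k) K]
    [IsFractionRing (MvPolynomial (Fin 2) k) K]
    [Algebra k K] [IsScalarTower k (MvPolynomial (Fin 2) k) K]
    (x y : K)
    (hx : x = algebraMap (MvPolynomial (Fin 2) k) K (X 0))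
    (hy : y = algebraMap (MvPolynomial (Fin 2) k) K (X 1))
    (D : Derivation k K K)
    (hDx : D x = (algebraMap k K b * x ^ 3 * y ^ 2) / (x ^ 2 * y ^ 2))
    (hDy : D y = (algebraMap k K a * x ^ 2 * y ^ 2 + x ^ 2 + x ^ 4 * y ^ 4 + y ^ 4
        + algebraMap k K b * x ^ 2 * y ^ 3) / (x ^ 2 * y ^ 2)) :
    ∀ z : K, D (D z) = algebraMap k K b * D z := by
  haveI hK2 : CharP K 2 := charP_of_injective_algebraMap (algebraMap k K).injective 2
  have htwo : (2 : K) = 0 := CharTwo.two_eq_zero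
  have hinj := IsFractionRing.injective (MvPolynomial (Fin 2) k) K
  have hx0 : x ≠ 0 := by
    rw [hx, Ne, map_eq_zero_iff _ hinj]
    exact MvPolynomial.X_ne_zero 0
  have hy0 : y ≠ 0 := by
    rw [hy, Ne, map_eq_zero_iff _ hinj]
    exact MvPolynomial.X_ne_zero 1
  set bK := algebraMap k K b with hbK
  set aK := algebraMap k K a with haK
  -- squares have zero derivative in characteristic 2
  have hsq : ∀ u : K, D (u ^ 2) = 0 := by
    intro u
    have : u ^ 2 = u * u := sq u
    rw [this, Derivation.leibniz, smul_eq_mul]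
    linear_combination (u * D u) * htwo
  -- simplified formulas
  have hDx' : D x = bK * x := by
    rw [hDx]
    field_simp
  have hDy' : D y = aK + (y⁻¹) ^ 2 + (x * y) ^ 2 + (x⁻¹ * y) ^ 2 + bK * y := by
    rw [hDy]
    field_simp
  have hDDx : D (D x) = bK * D x := by
    conv_lhs => rw [hDx']
    rw [Derivation.leibniz, smul_eq_mul, smul_eq_mul, hbK, Derivation.map_algebraMap, hDx']
    ring
  have hDDy : D (D y) = bK * D y := by
    conv_lhs => rw [hDy']
    simp only [map_add, hsq, Derivation.leibniz, smul_eq_mul, hbK, haK,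
      Derivation.map_algebraMap]
    ring
  -- closure under multiplication
  have key : ∀ u v : K, D (D u) = bK * D u → D (D v) = bK * D v →
      D (D (u * v)) = bK * D (u * v) := by
    intro u v hu hv
    simp only [Derivation.leibniz, smul_eq_mul, map_add]
    rw [hu, hv]
    linear_combination (D u * D v) * htwo
  -- the property holds on the image of the polynomial ring
  have hpoly : ∀ p : MvPolynomial (Fin 2) k,
      D (D (algebraMap (MvPolynomial (Fin 2) k) K p))
        = bK * D (algebraMap (MvPolynomial (Fin 2) k) K p) := by
    intro p
    induction p using MvPolynomial.induction_on with
    | C r =>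
        rw [show (algebraMap (MvPolynomial (Fin 2) k) K) (C r) = algebraMap k K r by
          rw [← MvPolynomial.algebraMap_eq, ← IsScalarTower.algebraMap_apply]]
        simp [Derivation.map_algebraMap]
    | add p q hp hq =>
        rw [map_add, map_add, map_add, hp, hq]
        ring
    | mul_X p i hp =>
        rw [map_mul]
        refine key _ _ hp ?_
        fin_cases i
        · simp only [Fin.zero_eta]
          rw [← hx]; exact hDDx
        · simp only [Fin.mk_one]
          rw [← hy]; exact hDDy
  -- extend to the whole fraction field
  intro z
  obtain ⟨p, q, hq, hz⟩ := IsFractionRing.div_surjective (A := MvPolynomial (Fin 2) k) z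
  have hQ0 : algebraMap (MvPolynomial (Fin 2) k) K q ≠ 0 := by
    rw [Ne, map_eq_zero_iff _ hinj]
    exact nonZeroDivisors.ne_zero hq
  set Q := algebraMap (MvPolynomial (Fin 2) k) K q with hQ
  have hP : algebraMap (MvPolynomial (Fin 2) k) K p = z * Q := by
    rw [← hz]
    field_simp
  have h1 := hpoly p
  have h2q := hpoly q
  rw [hP] at h1
  simp only [Derivation.leibniz, smul_eq_mul, map_add] at h1
  rw [← hQ] at h2q
  have hQz : Q * D (D z) = Q * (bK * D z) := by
    linear_combination h1 - z * h2q - (D Q * D z) * htwo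
  exact mul_left_cancel₀ hQ0 hQz
end

section
/- Let k be a field of characteristic 2 with a ∈ k, a ≠ 0, and let D be the k-derivation of k(t,x) defined by D = t(at+1) ∂/∂t + (x+1) ∂/∂x. Then D∘D = D. -/
open MvPolynomial

/-- `D = t(at+1)∂/∂t + (x+1)∂/∂x` on `k(t,x)` in characteristic 2, with `a ≠ 0`,
satisfies `D ∘ D = D`. -/
theorem derivation_VIII_multiplicative (k : Type*) [Field k] [CharP k 2]
    (a : k) (ha : a ≠ 0)
    (K : Type*) [Field K] [Algebra (MvPolynomial (Fin 2) k) K]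
    [IsFractionRing (MvPolynomial (Fin 2) k) K]
    [Algebra k K] [IsScalarTower k (MvPolynomial (Fin 2) k) K]
    (t x : K)
    (ht : t = algebraMap (MvPolynomial (Fin 2) k) K (X 0))
    (hx : x = algebraMap (MvPolynomial (Fin 2) k) K (X 1))
    (D : Derivation k K K)
    (hDt : D t = t * (algebraMap k K a * t + 1)) (hDx : D x = x + 1) :
    ∀ z : K, D (D z) = D z := by
  have hinj : Function.Injective (algebraMap k K) := (algebraMap k K).injective
  haveI hK2 : CharP K 2 := charP_of_injective_algebraMap hinj 2
  have htwo : (2 : K) = 0 := by exact_mod_cast CharP.cast_eq_zero K 2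
  -- E = D ∘ D - D is a derivation in characteristic 2
  let E : Derivation k K K :=
  { toFun := fun z => D (D z) - D z
    map_add' := fun f g => by simp only [map_add]; ring
    map_smul' := fun c f => by
      show D (D (c • f)) - D (c • f) = c • (D (D f) - D f)
      rw [D.map_smul, D.map_smul, smul_sub]
    map_one_eq_zero' := by
      show D (D 1) - D 1 = 0
      rw [D.map_one_eq_zero, D.map_zero, sub_zero]
    leibniz' := fun f g => by
      show D (D (f * g)) - D (f * g) =
        f • (D (D g) - D g) + g • (D (D f) - D f)
      simp only [Derivation.leibniz, smul_eq_mul, map_add, map_mul]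
      linear_combination (D f * D g) * htwo }
  have hE : ∀ z : K, E z = D (D z) - D z := fun z => rfl
  -- E vanishes on t and x
  have hEt : E t = 0 := by
    rw [hE, hDt]
    have h1 : D (algebraMap k K a * t + 1) = algebraMap k K a * D t := by
      rw [map_add, D.map_one_eq_zero, add_zero,
        show algebraMap k K a * t = a • t from (Algebra.smul_def a t).symm,
        D.map_smul, Algebra.smul_def]
    have h0 : D (t * (algebraMap k K a * t + 1)) = D t * (algebraMap k K a * t + 1)
        + t * (algebraMap k K a * D t) := by
      rw [Derivation.leibniz, smul_eq_mul, smul_eq_mul, h1]; ring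
    rw [h0, hDt]
    ring_nf
    linear_combination (t ^ 3 * algebraMap k K a ^ 2 + t ^ 2 * algebraMap k K a) * htwo
  have hEx : E x = 0 := by
    rw [hE, hDx, map_add, D.map_one_eq_zero, add_zero, hDx]
    ring
  -- hence E vanishes on the polynomial ring
  have hEpoly : ∀ p : MvPolynomial (Fin 2) k,
      E (algebraMap (MvPolynomial (Fin 2) k) K p) = 0 := by
    have hzero : E.compAlgebraMap (MvPolynomial (Fin 2) k) = 0 := by
      apply derivation_ext
      intro i
      fin_cases i
      · simpa [Derivation.compAlgebraMap_apply, ← ht] using hEt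
      · simpa [Derivation.compAlgebraMap_apply, ← hx] using hEx
    intro p
    have := DFunLike.congr_fun hzero p
    simpa [Derivation.compAlgebraMap_apply] using this
  -- and hence on all of K
  intro z
  obtain ⟨p, q, hq, hz⟩ := IsFractionRing.div_surjective (A := MvPolynomial (Fin 2) k) z
  have hq0 : algebraMap (MvPolynomial (Fin 2) k) K q ≠ 0 :=
    IsFractionRing.to_map_ne_zero_of_mem_nonZeroDivisors hq
  set P := algebraMap (MvPolynomial (Fin 2) k) K p
  set Q := algebraMap (MvPolynomial (Fin 2) k) K q
  have hzQ : z * Q = P := by rw [← hz, div_mul_cancel₀ _ hq0]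
  have hleib : E (z * Q) = z * E Q + Q * E z := by
    rw [Derivation.leibniz, smul_eq_mul, smul_eq_mul]
  have hQEz : Q * E z = 0 := by
    have h1 : E (z * Q) = 0 := by rw [hzQ]; exact hEpoly p
    have h2' : E Q = 0 := hEpoly q
    rw [h1, h2', mul_zero, zero_add] at hleib
    exact hleib.symm
  have hEz : E z = 0 := by
    rcases mul_eq_zero.mp hQEz with h | h
    · exact absurd h hq0
    · exact h
  have := hE z
  rw [hEz] at this
  exact sub_eq_zero.mp this.symm
end

section
/- Let k be a field of characteristic 2 with elements a, b ∈ k, a ≠ 0, b ≠ 0, and let D be the k-derivation of k(x,y) given by D = (1/(x y^2))·(a x^2 y^2 ∂/∂x + (x^4 y^4 + b y^4 + x^2 y^2 + x^2) ∂/∂y). Then D∘D = a·D. -/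
open MvPolynomial

/-- In characteristic 2, `z ↦ D (D z) + c * D z` is a derivation. -/
def sqAddDer {k K : Type*} [CommRing k] [CommRing K] [Algebra k K]
    (h2 : (2 : K) = 0) (c : K) (D : Derivation k K K) : Derivation k K K where
  toLinearMap := (D.toLinearMap ∘ₗ D.toLinearMap) + c • D.toLinearMap
  map_one_eq_zero' := by simp
  leibniz' u v := by
    simp only [LinearMap.add_apply, LinearMap.comp_apply, LinearMap.smul_apply,
      Derivation.coeFn_coe, smul_eq_mul, Derivation.leibniz, map_add]
    linear_combination (D u * D v) * h2

lemma sqAddDer_apply {k K : Type*} [CommRing k] [CommRing K] [Algebra k K]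
    (h2 : (2 : K) = 0) (c : K) (D : Derivation k K K) (z : K) :
    sqAddDer h2 c D z = D (D z) + c * D z := rfl

/-- `D = (1/(xy²))(ax²y² ∂/∂x + (x⁴y⁴ + by⁴ + x²y² + x²) ∂/∂y)` on `k(x,y)` in
characteristic 2, with `a ≠ 0` and `b ≠ 0`, satisfies `D ∘ D = a·D`. -/
theorem derivation_D8_classical_pclosed (k : Type*) [Field k] [CharP k 2]
    (a b : k) (ha : a ≠ 0) (hb : b ≠ 0)
    (K : Type*) [Field K] [Algebra (MvPolynomial (Fin 2) k) K]
    [IsFractionRing (MvPolynomial (Fin 2) k) K]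
    [Algebra k K] [IsScalarTower k (MvPolynomial (Fin 2) k) K]
    (x y : K)
    (hx : x = algebraMap (MvPolynomial (Fin 2) k) K (X 0))
    (hy : y = algebraMap (MvPolynomial (Fin 2) k) K (X 1))
    (D : Derivation k K K)
    (hDx : D x = (algebraMap k K a * x ^ 2 * y ^ 2) / (x * y ^ 2))
    (hDy : D y = (x ^ 4 * y ^ 4 + algebraMap k K b * y ^ 4 + x ^ 2 * y ^ 2 + x ^ 2)
        / (x * y ^ 2)) :
    ∀ z : K, D (D z) = algebraMap k K a * D z := by
  have hinj := IsFractionRing.injective (MvPolynomial (Fin 2) k) K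
  have h2 : (2 : K) = 0 := by
    haveI : CharP K 2 :=
      charP_of_injective_algebraMap hinj 2
    exact CharTwo.two_eq_zero
  set c : K := algebraMap k K a with hc
  have hx0 : x ≠ 0 := by
    rw [hx]; exact (map_ne_zero_iff _ hinj).mpr (MvPolynomial.X_ne_zero 0)
  have hy0 : y ≠ 0 := by
    rw [hy]; exact (map_ne_zero_iff _ hinj).mpr (MvPolynomial.X_ne_zero 1)
  have hDx' : D x = c * x := by rw [hDx]; field_simp
  -- squares are killed by D in char 2
  have hsq : ∀ u : K, D (u ^ 2) = 0 := fun u => by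
    rw [sq, D.leibniz, smul_eq_mul]
    linear_combination (u * D u) * h2
  have h4 : ∀ u : K, D (u ^ 4) = 0 := fun u => by
    have : (u : K) ^ 4 = (u ^ 2) ^ 2 := by ring
    rw [this, hsq]
  -- E is the derivation D∘D + c•D
  set E := sqAddDer h2 c D with hE
  have hEx : E x = 0 := by
    rw [sqAddDer_apply, hDx', D.leibniz, Derivation.map_algebraMap, smul_eq_mul, smul_eq_mul,
      hDx']
    linear_combination (c * (c * x)) * h2
  have hEy : E y = 0 := by
    have hg0 : x * y ^ 2 ≠ 0 := by
      exact mul_ne_zero hx0 (pow_ne_zero 2 hy0)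
    have hDg : D (x * y ^ 2) = c * (x * y ^ 2) := by
      rw [D.leibniz, hsq, hDx', smul_eq_mul, smul_eq_mul]; ring
    have hDf : D (x ^ 4 * y ^ 4 + algebraMap k K b * y ^ 4 + x ^ 2 * y ^ 2 + x ^ 2) = 0 := by
      simp only [map_add, D.leibniz, hsq, h4, Derivation.map_algebraMap, smul_eq_mul]
      ring
    have hfg : x ^ 4 * y ^ 4 + algebraMap k K b * y ^ 4 + x ^ 2 * y ^ 2 + x ^ 2
        = (x * y ^ 2) * D y := by
      rw [hDy]; field_simp
    have := congrArg D hfg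
    rw [hDf, D.leibniz, hDg, smul_eq_mul, smul_eq_mul] at this
    have hEyg : E y * (x * y ^ 2) = 0 := by
      rw [sqAddDer_apply]
      linear_combination -this
    rcases mul_eq_zero.mp hEyg with h | h
    · exact h
    · exact absurd h hg0
  -- E vanishes on the image of the polynomial ring
  have hEalg : ∀ p : MvPolynomial (Fin 2) k, E (algebraMap (MvPolynomial (Fin 2) k) K p) = 0 := by
    intro p
    induction p using MvPolynomial.induction_on with
    | C r =>
        rw [← MvPolynomial.algebraMap_eq, ← IsScalarTower.algebraMap_apply]
        exact Derivation.map_algebraMap E r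
    | add p q hp hq => rw [map_add, map_add, hp, hq, add_zero]
    | mul_X p i hp =>
        rw [map_mul, E.leibniz, hp, smul_zero, add_zero, smul_eq_mul]
        fin_cases i <;> simp only [Fin.zero_eta, Fin.mk_one, Fin.isValue]
        · rw [← hx, hEx, mul_zero]
        · rw [← hy, hEy, mul_zero]
  -- hence E vanishes everywhere
  intro z
  obtain ⟨p, q, hq, hpq⟩ := IsFractionRing.div_surjective (A := MvPolynomial (Fin 2) k) z
  have hq0 : algebraMap (MvPolynomial (Fin 2) k) K q ≠ 0 :=
    IsFractionRing.to_map_ne_zero_of_mem_nonZeroDivisors hq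
  have hzq : z * algebraMap (MvPolynomial (Fin 2) k) K q
      = algebraMap (MvPolynomial (Fin 2) k) K p := by
    rw [← hpq]; field_simp
  have hEz : E z = 0 := by
    have := congrArg E hzq
    rw [hEalg, E.leibniz, hEalg, smul_zero, zero_add, smul_eq_mul] at this
    rcases mul_eq_zero.mp this with h | h
    · exact absurd h hq0
    · exact h
  rw [sqAddDer_apply] at hEz
  linear_combination hEz - (c * D z) * h2
end

section
/- Let k be a field of characteristic 2 and consider the field k(t,x,y) with the relation y^2 + t^2 y = x^3 (i.e., the function field of the surface y^2 + t^2 y = x^3). Let D = ∂/∂t + t^2 ∂/∂x be the induced derivation. Set T = t^2, u = x + t^3, v = y + t x^2. Then D(T) = 0, D(u) = 0, D(v) = 0, and the relation v^2 + T v = T u^4 + u^3 + T^3 u + T^7 holds. -/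
/-- On the function field of the surface `y² + t²y = x³` over an algebraically closed field
`k` of characteristic 2, with `D = ∂/∂t + t²∂/∂x` (so `D t = 1`, `D x = t²`, and
`D y = x²` is determined by the relation), the elements `T = t²`, `u = x + t³`,
`v = y + t x²` satisfy `D T = D u = D v = 0` and `v² + T v = T u⁴ + u³ + T³ u + T⁷`. -/
theorem E6A2_supersingular_quotient_equation (k : Type*) [Field k] [IsAlgClosed k] [CharP k 2]
    (F : Type*) [Field F] [CharP F 2] [Algebra k F]
    (t x y : F) (ht : t ≠ 0)
    (hrel : y ^ 2 + t ^ 2 * y = x ^ 3)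
    (D : Derivation k F F)
    (hDt : D t = 1) (hDx : D x = t ^ 2) (hDy : D y = x ^ 2) :
    D (t ^ 2) = 0 ∧ D (x + t ^ 3) = 0 ∧ D (y + t * x ^ 2) = 0 ∧
      (y + t * x ^ 2) ^ 2 + t ^ 2 * (y + t * x ^ 2) =
        t ^ 2 * (x + t ^ 3) ^ 4 + (x + t ^ 3) ^ 3 + (t ^ 2) ^ 3 * (x + t ^ 3) + (t ^ 2) ^ 7 := by
  haveI : CharP F 2 := ‹_›
  have h2 : (2 : F) = 0 := by exact_mod_cast CharP.cast_eq_zero F 2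
  refine ⟨?_, ?_, ?_, ?_⟩
  · rw [Derivation.leibniz_pow, hDt]
    simp only [smul_eq_mul, Nat.cast_ofNat]
    linear_combination t * h2
  · rw [map_add, Derivation.leibniz_pow, hDt]
    simp only [smul_eq_mul, Nat.cast_ofNat, hDx]
    linear_combination (2 * t ^ 2) * h2
  · rw [map_add, Derivation.leibniz, Derivation.leibniz_pow, hDt, hDx, hDy]
    simp only [smul_eq_mul, Nat.cast_ofNat]
    linear_combination (x ^ 2 + t ^ 3 * x) * h2
  · linear_combination hrel + (t * x ^ 2 * y - t ^ 3 * x ^ 2 - 2 * t ^ 5 * x ^ 3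
      - 3 * t ^ 8 * x ^ 2 - 2 * t ^ 11 * x - t ^ 14 - 2 * t ^ 6 * x - t ^ 9) * h2
end

section
/- Let k be a field of characteristic 2 with a ∈ k, a ≠ 0. In the rational function field k(x,y), set u = x^2, v = y^2, z = a x^7 + x^5 y + x^3 y + x y^7. Then z^2 = a^2 u^7 + u^5 v + u^3 v + u v^7, and for the derivation D = (1/x^5)·(x(x^4 + x^2 + y^6) ∂/∂x + (a x^6 + y(x^4 + x^2 + y^6)) ∂/∂y), one has D(u) = D(v) = D(z) = 0. -/
/-!
In characteristic `2` squaring is additive and every derivation kills squares, which gives the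
first three claims. For `H = aX⁷ + X⁵Y + X³Y + XY⁷` one has `z = H(x, y)` and, modulo `2`,
`H_x = aX⁶ + Y(X⁴ + X² + Y⁶)` and `H_y = X(X⁴ + X² + Y⁶)`. So `D = x⁻⁵ (H_y ∂ₓ + H_x ∂_y)` is
Hamiltonian, and by the chain rule `D z = 2 H_x H_y / x⁵ = 0`.
-/

open MvPolynomial

theorem Derivation.map_aeval_mvPolynomial {R A σ : Type*} [CommSemiring R] [CommSemiring A]
    [Algebra R A] [Fintype σ] (D : Derivation R A A) (v : σ → A) (p : MvPolynomial σ R) :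
    D (aeval v p) = ∑ i, aeval v (pderiv i p) * D (v i) := by
  classical
  induction p using MvPolynomial.induction_on with
  | C r => simp
  | add p q hp hq => simp only [map_add, hp, hq, add_mul, Finset.sum_add_distrib]
  | mul_X p j hp =>
    simp only [map_mul, aeval_X, Derivation.leibniz, smul_eq_mul, hp, map_add, pderiv_X, add_mul,
      Finset.sum_add_distrib, Finset.mul_sum, Pi.single_apply, mul_ite, mul_one, mul_zero,
      apply_ite (aeval v), map_zero, ite_mul, zero_mul, Finset.sum_ite_eq, Finset.mem_univ,
      if_true, mul_assoc]

theorem Derivation.map_sq_of_charTwo {R A : Type*} [CommSemiring R] [CommSemiring A]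
    [Algebra R A] [CharP A 2] (D : Derivation R A A) (f : A) : D (f ^ 2) = 0 := by
  rw [sq, D.leibniz, smul_eq_mul, CharTwo.add_self_eq_zero]

theorem Derivation.map_aeval_eq_zero_of_hamiltonian {R K : Type*} [CommSemiring R] [Field K]
    [Algebra R K] [CharP K 2] (D : Derivation R K K) (H : MvPolynomial (Fin 2) R) (x y c : K)
    (hDx : D x = aeval ![x, y] (pderiv 1 H) / c) (hDy : D y = aeval ![x, y] (pderiv 0 H) / c) :
    D (aeval ![x, y] H) = 0 := by
  simp only [D.map_aeval_mvPolynomial, Fin.sum_univ_two, Matrix.cons_val_zero, Matrix.cons_val_one]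
  rw [hDx, hDy, mul_div_assoc', mul_div_assoc', mul_comm, ← add_div, CharTwo.add_self_eq_zero,
    zero_div]

theorem D8_supersingular_invariants_general (k : Type*) [Field k] [CharP k 2] (a : k)
    (K : Type*) [Field K] [Algebra k K] (x y : K) (D : Derivation k K K)
    (hDx : D x = (x * (x ^ 4 + x ^ 2 + y ^ 6)) / x ^ 5)
    (hDy : D y = (algebraMap k K a * x ^ 6 + y * (x ^ 4 + x ^ 2 + y ^ 6)) / x ^ 5) :
    (algebraMap k K a * x ^ 7 + x ^ 5 * y + x ^ 3 * y + x * y ^ 7) ^ 2 =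
        (algebraMap k K a) ^ 2 * (x ^ 2) ^ 7 + (x ^ 2) ^ 5 * (y ^ 2)
          + (x ^ 2) ^ 3 * (y ^ 2) + (x ^ 2) * (y ^ 2) ^ 7 ∧
      D (x ^ 2) = 0 ∧ D (y ^ 2) = 0 ∧
      D (algebraMap k K a * x ^ 7 + x ^ 5 * y + x ^ 3 * y + x * y ^ 7) = 0 := by
  have : CharP K 2 := charP_of_injective_algebraMap (algebraMap k K).injective 2
  refine ⟨by simp only [CharTwo.add_sq]; ring, D.map_sq_of_charTwo x, D.map_sq_of_charTwo y, ?_⟩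
  let H : MvPolynomial (Fin 2) k := C a * X 0 ^ 7 + X 0 ^ 5 * X 1 + X 0 ^ 3 * X 1 + X 0 * X 1 ^ 7
  have hH : aeval ![x, y] H = algebraMap k K a * x ^ 7 + x ^ 5 * y + x ^ 3 * y + x * y ^ 7 := by
    simp [H]
  rw [← hH]
  refine D.map_aeval_eq_zero_of_hamiltonian H x y (x ^ 5) ?_ ?_
  · rw [hDx]
    congr 1
    simp [H, pderiv_X, CharTwo.ofNat_eq_mod, mul_add, ← pow_succ']
  · rw [hDy]
    congr 1
    simp [H, pderiv_X, CharTwo.ofNat_eq_mod, mul_add, ← pow_succ', add_assoc]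

/-- In `k(x,y)` (char 2) with `a ≠ 0`, for `u = x²`, `v = y²`,
`z = ax⁷ + x⁵y + x³y + xy⁷` one has `z² = a²u⁷ + u⁵v + u³v + uv⁷`; and for
`D = (1/x⁵)(x(x⁴+x²+y⁶)∂/∂x + (ax⁶ + y(x⁴+x²+y⁶))∂/∂y)` one has `D u = D v = D z = 0`. -/
theorem D8_supersingular_invariants (k : Type*) [Field k] [CharP k 2]
    (a : k) (ha : a ≠ 0)
    (K : Type*) [Field K] [Algebra (MvPolynomial (Fin 2) k) K]
    [IsFractionRing (MvPolynomial (Fin 2) k) K]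
    [Algebra k K] [IsScalarTower k (MvPolynomial (Fin 2) k) K]
    (x y : K)
    (hx : x = algebraMap (MvPolynomial (Fin 2) k) K (X 0))
    (hy : y = algebraMap (MvPolynomial (Fin 2) k) K (X 1))
    (D : Derivation k K K)
    (hDx : D x = (x * (x ^ 4 + x ^ 2 + y ^ 6)) / x ^ 5)
    (hDy : D y = (algebraMap k K a * x ^ 6 + y * (x ^ 4 + x ^ 2 + y ^ 6)) / x ^ 5) :
    (algebraMap k K a * x ^ 7 + x ^ 5 * y + x ^ 3 * y + x * y ^ 7) ^ 2 =
        (algebraMap k K a) ^ 2 * (x ^ 2) ^ 7 + (x ^ 2) ^ 5 * (y ^ 2)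
          + (x ^ 2) ^ 3 * (y ^ 2) + (x ^ 2) * (y ^ 2) ^ 7 ∧
      D (x ^ 2) = 0 ∧ D (y ^ 2) = 0 ∧
      D (algebraMap k K a * x ^ 7 + x ^ 5 * y + x ^ 3 * y + x * y ^ 7) = 0 :=
  D8_supersingular_invariants_general k a K x y D hDx hDy
end

section
/- Let k be an algebraically closed field of characteristic 2 and let ζ ∈ k. Suppose c1 = ζ, b0, b1, α0, α1, α2, α3 ∈ k satisfy the system: c1^2 = c1^7, α3^2 = 0, c1 b1^4 = 0, α2^2 + c1 α3 = c1^3 b1, c1 α2 = b1^3 + c1^3 b0, α1^2 + c1 α1 = b0 b1^2, c1 α0 = c1 b0^4 + b0^2 b1, α0^2 = b0^3, with c1 ≠ 0. Then b0 = b1 = 0, α0 = α2 = α3 = 0, c1^5 = 1, and α1 ∈ {0, c1}. -/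
/-- The system of equations arising in computing `Aut` of the supersingular Enriques
surface of type `E₆+A₂` (`y² + ty = tx⁴ + x³ + t³x + t⁷`) over an algebraically closed
field of characteristic 2. -/
theorem E6A2_supersingular_aut_system (k : Type*) [Field k] [IsAlgClosed k] [CharP k 2]
    (c1 b0 b1 a0 a1 a2 a3 : k)
    (h1 : c1 ^ 2 = c1 ^ 7)
    (h2 : a3 ^ 2 = 0)
    (h3 : c1 * b1 ^ 4 = 0)
    (h4 : a2 ^ 2 + c1 * a3 = c1 ^ 3 * b1)
    (h5 : c1 * a2 = b1 ^ 3 + c1 ^ 3 * b0)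
    (h6 : a1 ^ 2 + c1 * a1 = b0 * b1 ^ 2)
    (h7 : c1 * a0 = c1 * b0 ^ 4 + b0 ^ 2 * b1)
    (h8 : a0 ^ 2 = b0 ^ 3)
    (hc : c1 ≠ 0) :
    b0 = 0 ∧ b1 = 0 ∧ a0 = 0 ∧ a2 = 0 ∧ a3 = 0 ∧ c1 ^ 5 = 1 ∧ (a1 = 0 ∨ a1 = c1) := by

  have hb1 : b1 = 0 := by
    have := (mul_eq_zero.mp h3).resolve_left hc
    exact pow_eq_zero_iff (n := 4) (by norm_num) |>.mp this
  have ha3 : a3 = 0 := pow_eq_zero_iff (n := 2) (by norm_num) |>.mp h2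
  have ha2 : a2 = 0 := by
    have : a2 ^ 2 = 0 := by rw [hb1, ha3] at h4; simpa using h4
    exact pow_eq_zero_iff (n := 2) (by norm_num) |>.mp this
  have hb0 : b0 = 0 := by
    rw [hb1, ha2] at h5
    have : c1 ^ 3 * b0 = 0 := by simpa using h5.symm
    have := (mul_eq_zero.mp this).resolve_left (pow_ne_zero _ hc)
    exact this
  have ha0 : a0 = 0 := by
    have : a0 ^ 2 = 0 := by rw [hb0] at h8; simpa using h8
    exact pow_eq_zero_iff (n := 2) (by norm_num) |>.mp this
  have hc5 : c1 ^ 5 = 1 := by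
    have h : c1 ^ 2 * (c1 ^ 5 - 1) = 0 := by ring_nf; rw [← h1]; ring
    have := (mul_eq_zero.mp h).resolve_left (pow_ne_zero _ hc)
    linear_combination this
  refine ⟨hb0, hb1, ha0, ha2, ha3, hc5, ?_⟩
  have h : a1 * (a1 + c1) = 0 := by
    rw [hb1] at h6; ring_nf; ring_nf at h6; simpa using h6
  rcases mul_eq_zero.mp h with h | h
  · exact Or.inl h
  · right
    have h2 : (2 : k) = 0 := by exact_mod_cast CharP.cast_eq_zero k 2
    linear_combination h - c1 * h2
end

section
/- Let k be an algebraically closed field of characteristic 2, a, b ∈ k with b ≠ 0. The solutions (b0, b1, c1, e1) ∈ k^4 of the system e1^2 = c1^7, e1^2 = c1^5, c1 b1^4 + a c1^3 b1^2 + b c1^4 b1 = 0, e1^2 + a c1^3 b0^2 + c1^3 = 0, c1 b0^4 = 0, with c1 ≠ 0, e1 ≠ 0 are exactly: c1 = e1 = 1, b0 = 0, and b1 either 0 or a root of z^3 + a z + b = 0. In particular there are exactly 4 solutions. -/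
/-! Since `c₁ ≠ 0`, the first two equations give `c₁² = 1`, and squaring is injective in
characteristic `2`, so `c₁ = 1`; then `e₁ = 1`, `b₀ = 0`, and `b₁` is a root of
`z⁴ + az² + bz = z (z³ + az + b)`. In characteristic `2` the derivative of this quartic is the
nonzero constant `b`, so it is separable and has exactly four roots. -/

open Polynomial

/-- The system of equations on `(b₀, b₁, c₁, e₁)` cut out by the automorphisms of
`y² = t x⁴ + a t³ x² + b t⁴ x + t³ + t⁷`. -/
def D4D4AutSystem {R : Type*} [CommRing R] (a b b0 b1 c1 e1 : R) : Prop :=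
  e1 ^ 2 = c1 ^ 7 ∧ e1 ^ 2 = c1 ^ 5 ∧
    c1 * b1 ^ 4 + a * c1 ^ 3 * b1 ^ 2 + b * c1 ^ 4 * b1 = 0 ∧
    e1 ^ 2 + a * c1 ^ 3 * b0 ^ 2 + c1 ^ 3 = 0 ∧
    c1 * b0 ^ 4 = 0

section CharTwo

variable {R : Type*} [CommRing R] [CharP R 2]

theorem derivative_X_pow_four_add_C_mul_X_sq_add_C_mul_X (a b : R) :
    derivative (X ^ 4 + C a * X ^ 2 + C b * X : R[X]) = C b := by
  have h4 : (4 : R) = 0 := by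
    linear_combination (2 : R) * CharTwo.two_eq_zero (R := R)
  simp [derivative_pow, CharTwo.two_eq_zero, h4]

variable [NoZeroDivisors R]

theorem CharTwo.eq_one_of_sq_eq_one {x : R} (hx : x ^ 2 = 1) : x = 1 :=
  CharTwo.sq_injective (hx.trans (one_pow 2).symm)

theorem d4d4AutSystem_iff (a b b0 b1 c1 e1 : R) (hc : c1 ≠ 0) :
    D4D4AutSystem a b b0 b1 c1 e1 ↔
      c1 = 1 ∧ e1 = 1 ∧ b0 = 0 ∧ (b1 = 0 ∨ b1 ^ 3 + a * b1 + b = 0) := by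
  constructor
  · rintro ⟨h7, h5, hb1, -, hb0⟩
    have hc1 : c1 = 1 := by
      have h : c1 ^ 5 * (c1 ^ 2 - 1) = 0 := by linear_combination h5 - h7
      exact CharTwo.eq_one_of_sq_eq_one <| sub_eq_zero.mp <|
        (mul_eq_zero.mp h).resolve_left (pow_ne_zero 5 hc)
    subst hc1
    refine ⟨rfl, CharTwo.eq_one_of_sq_eq_one (by simpa using h5),
      pow_eq_zero_iff four_ne_zero |>.mp (by simpa using hb0), mul_eq_zero.mp ?_⟩
    linear_combination hb1
  · rintro ⟨rfl, rfl, rfl, hb1⟩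
    refine ⟨by ring, by ring, ?_, by linear_combination CharTwo.two_eq_zero (R := R), by ring⟩
    rcases hb1 with rfl | h
    · ring
    · linear_combination b1 * h

theorem setOf_d4d4AutSystem_eq_image [Nontrivial R] (a b : R) :
    {p : R × R × R × R |
        p.2.2.1 ≠ 0 ∧ p.2.2.2 ≠ 0 ∧ D4D4AutSystem a b p.1 p.2.1 p.2.2.1 p.2.2.2} =
      (fun z : R => ((0 : R), z, (1 : R), (1 : R))) '' {z | z = 0 ∨ z ^ 3 + a * z + b = 0} := by
  ext ⟨b0, b1, c1, e1⟩
  simp only [Set.mem_ofPred_eq, Set.mem_image, Prod.mk.injEq]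
  constructor
  · rintro ⟨hc, -, h⟩
    obtain ⟨rfl, rfl, rfl, hb1⟩ := (d4d4AutSystem_iff a b b0 b1 c1 e1 hc).mp h
    exact ⟨b1, hb1, rfl, rfl, rfl, rfl⟩
  · rintro ⟨z, hz, rfl, rfl, rfl, rfl⟩
    exact ⟨one_ne_zero, one_ne_zero,
      (d4d4AutSystem_iff a b 0 z 1 1 one_ne_zero).mpr ⟨rfl, rfl, rfl, hz⟩⟩

end CharTwo

section CharTwoField

variable {k : Type*} [Field k] [CharP k 2]

theorem separable_X_pow_four_add_C_mul_X_sq_add_C_mul_X (a : k) {b : k} (hb : b ≠ 0) :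
    (X ^ 4 + C a * X ^ 2 + C b * X : k[X]).Separable := by
  rw [separable_def, derivative_X_pow_four_add_C_mul_X_sq_add_C_mul_X]
  simpa using (isCoprime_mul_unit_left_right (isUnit_C.mpr hb.isUnit) _ 1).mpr isCoprime_one_right

theorem ncard_setOf_eq_zero_or_cubic_root [IsAlgClosed k] (a : k) {b : k} (hb : b ≠ 0) :
    {z : k | z = 0 ∨ z ^ 3 + a * z + b = 0}.ncard = 4 := by
  have hq : (X ^ 4 + C a * X ^ 2 + C b * X : k[X]).natDegree = 4 := by compute_degree!
  set q : k[X] := X ^ 4 + C a * X ^ 2 + C b * X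
  have hroots : {z : k | z = 0 ∨ z ^ 3 + a * z + b = 0} = q.rootSet k := by
    ext z
    rw [mem_rootSet_of_ne (by rintro h; simp [h] at hq)]
    simp only [Set.mem_ofPred_eq, q, map_add, map_mul, map_pow, aeval_X, aeval_C,
      Algebra.algebraMap_self, RingHom.id_apply, ← mul_eq_zero]
    constructor <;> intro h <;> linear_combination h
  rw [hroots, Set.ncard_eq_toFinset_card', Set.toFinset_card,
    card_rootSet_eq_natDegree (separable_X_pow_four_add_C_mul_X_sq_add_C_mul_X a hb)
      (IsAlgClosed.splits _), hq]

end CharTwoField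

/-- The solutions of the system arising in computing `Aut(X) ≅ (ℤ/2ℤ)³` for classical
Enriques surfaces of type `D₄+D₄` (`y² = tx⁴ + at³x² + bt⁴x + t³ + t⁷`, `b ≠ 0`):
the solutions `(b₀, b₁, c₁, e₁)` with `c₁ ≠ 0`, `e₁ ≠ 0` are exactly `c₁ = e₁ = 1`,
`b₀ = 0`, and `b₁` either `0` or a root of `z³ + az + b = 0`; there are exactly 4. -/
theorem D4D4_classical_aut_system (k : Type*) [Field k] [IsAlgClosed k] [CharP k 2]
    (a b : k) (hb : b ≠ 0) :
    (∀ b0 b1 c1 e1 : k, c1 ≠ 0 → e1 ≠ 0 →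
      ((e1 ^ 2 = c1 ^ 7 ∧ e1 ^ 2 = c1 ^ 5 ∧
        c1 * b1 ^ 4 + a * c1 ^ 3 * b1 ^ 2 + b * c1 ^ 4 * b1 = 0 ∧
        e1 ^ 2 + a * c1 ^ 3 * b0 ^ 2 + c1 ^ 3 = 0 ∧
        c1 * b0 ^ 4 = 0) ↔
       (c1 = 1 ∧ e1 = 1 ∧ b0 = 0 ∧ (b1 = 0 ∨ b1 ^ 3 + a * b1 + b = 0)))) ∧
    Set.ncard {p : k × k × k × k |
        p.2.2.1 ≠ 0 ∧ p.2.2.2 ≠ 0 ∧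
        p.2.2.2 ^ 2 = p.2.2.1 ^ 7 ∧ p.2.2.2 ^ 2 = p.2.2.1 ^ 5 ∧
        p.2.2.1 * p.2.1 ^ 4 + a * p.2.2.1 ^ 3 * p.2.1 ^ 2
          + b * p.2.2.1 ^ 4 * p.2.1 = 0 ∧
        p.2.2.2 ^ 2 + a * p.2.2.1 ^ 3 * p.1 ^ 2 + p.2.2.1 ^ 3 = 0 ∧
        p.2.2.1 * p.1 ^ 4 = 0} = 4 := by
  refine ⟨fun b0 b1 c1 e1 hc _ => d4d4AutSystem_iff a b b0 b1 c1 e1 hc, ?_⟩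
  have hinj : Function.Injective fun z : k => ((0 : k), z, (1 : k), (1 : k)) :=
    fun _ _ h => (Prod.mk.inj (Prod.mk.inj h).2).1
  calc _ = ((fun z : k => ((0 : k), z, (1 : k), (1 : k))) ''
          {z | z = 0 ∨ z ^ 3 + a * z + b = 0}).ncard :=
        congrArg Set.ncard (setOf_d4d4AutSystem_eq_image a b)
    _ = 4 := by rw [Set.ncard_image_of_injective _ hinj, ncard_setOf_eq_zero_or_cubic_root a hb]
end

section
/- Let k be an algebraically closed field of characteristic 2 and ζ ∈ k a primitive 7th root of unity, a ∈ k with a^7 = 1. Then the map σ defined on k(t,x,y) with relation y^2 + y = t x^4 + (t + a^4)^7 by t ↦ ζ t, x ↦ ζ^{-1/4} x + ζ^{-1/4}(ζ^{1/4} + 1) a^6 + ζ^{-1/4}(ζ^{5/4} + 1) a^2 t, y ↦ y + 1 + (1 + ζ^2) a^6 t^2 + (1 + ζ^3) a^2 t^3 preserves the relation y^2 + y = t x^4 + (t+a^4)^7 and has order 14. -/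
/-!
In the coordinates `X = x + a⁶ + a²t`, `Y = y + a⁶t² + a²t³` (an involutive change of variables
in characteristic 2) the surface becomes `Y² + Y = tX⁴ + t⁷ + 1`, using `a⁷ = 1`, and `σ` becomes
the diagonal map `(t, X, Y) ↦ (q⁴t, q⁶X, Y + 1)`, using `q⁷ = 1`; the latter holds because
`(q⁷)⁴ = ζ⁷ = 1` and Frobenius is injective. The diagonal map visibly preserves the normal form,
and as `q` has order 7 and `Y ↦ Y + 1` has order 2, it has order 14.
-/

open Function

theorem CharTwo.eq_one_of_pow_four_eq_one {R : Type*} [CommRing R] [IsReduced R] [CharP R 2]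
    {x : R} (h : x ^ 4 = 1) : x = 1 := by
  have : (x - 1) ^ 4 = 0 := by grind
  exact sub_eq_zero.mp (pow_eq_zero_iff (by norm_num) |>.mp this)

theorem Function.Semiconj.iterate_eq_id_iff {α β : Type*} {f : α → β} {ga : α → α} {gb : β → β}
    (hf : Bijective f) (h : Semiconj f ga gb) (n : ℕ) : ga^[n] = id ↔ gb^[n] = id := by
  have hn : f ∘ ga^[n] = gb^[n] ∘ f := funext (h.iterate_right n)
  constructor
  · intro hg
    exact hf.2.injective_comp_right (by simpa [hg] using hn.symm)
  · intro hg
    exact hf.1.comp_left (by simpa [hg] using hn)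

namespace E7A1Surface

section CommRing

variable {R : Type*} [CommRing R]

def OnSurface (a : R) (p : R × R × R) : Prop :=
  p.2.2 ^ 2 + p.2.2 = p.1 * p.2.1 ^ 4 + (p.1 + a ^ 4) ^ 7

def OnNormalSurface (p : R × R × R) : Prop :=
  p.2.2 ^ 2 + p.2.2 = p.1 * p.2.1 ^ 4 + p.1 ^ 7 + 1

def normalize (a : R) (p : R × R × R) : R × R × R :=
  (p.1, p.2.1 + a ^ 6 + a ^ 2 * p.1, p.2.2 + a ^ 6 * p.1 ^ 2 + a ^ 2 * p.1 ^ 3)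

def diagonalAut (q : R) (p : R × R × R) : R × R × R :=
  (q ^ 4 * p.1, q ^ 6 * p.2.1, p.2.2 + 1)

theorem normalize_involutive [CharP R 2] (a : R) : Involutive (normalize a) := by
  rintro ⟨t, x, y⟩
  simp only [normalize, Prod.mk.injEq]
  grind

theorem onSurface_iff_onNormalSurface [CharP R 2] {a : R} (ha : a ^ 7 = 1) (p : R × R × R) :
    OnSurface a p ↔ OnNormalSurface (normalize a p) := by
  obtain ⟨t, x, y⟩ := p
  simp only [OnSurface, OnNormalSurface, normalize]
  constructor <;> intro h <;> grind

theorem OnNormalSurface.diagonalAut [CharP R 2] {q : R} (hq : q ^ 7 = 1) {p : R × R × R}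
    (hp : OnNormalSurface p) : OnNormalSurface (diagonalAut q p) := by
  simp only [OnNormalSurface, E7A1Surface.diagonalAut] at hp ⊢
  grind

theorem diagonalAut_iterate (q : R) (n : ℕ) (p : R × R × R) :
    (diagonalAut q)^[n] p = (q ^ (4 * n) * p.1, q ^ (6 * n) * p.2.1, p.2.2 + n) := by
  induction n with
  | zero => simp
  | succ n ih =>
    rw [iterate_succ_apply', ih]
    simp only [diagonalAut, Prod.mk.injEq, Nat.cast_succ]
    refine ⟨by ring, by ring, by ring⟩

theorem diagonalAut_iterate_fourteen [CharP R 2] {q : R} (hq : q ^ 7 = 1) :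
    (diagonalAut q)^[14] = id := by
  funext p
  rw [diagonalAut_iterate]
  have h14 : ((14 : ℕ) : R) = 0 := by grind
  simp only [h14, id]
  grind

theorem diagonalAut_iterate_seven_ne_id [CharP R 2] (q : R) : (diagonalAut q)^[7] ≠ id := by
  intro h
  have h7 := congrArg Prod.snd (congrArg Prod.snd (congrFun h 0))
  simp only [diagonalAut_iterate, id] at h7
  grind

theorem diagonalAut_iterate_two_ne_id {q : R} (hq : q ^ 7 = 1) (hq1 : q ≠ 1) :
    (diagonalAut q)^[2] ≠ id := by
  intro h
  have h12 := congrArg Prod.fst (congrArg Prod.snd (congrFun h (0, 1, 0)))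
  simp only [diagonalAut_iterate, id, mul_one] at h12
  exact hq1 (by grind)

end CommRing

variable {K : Type*} [Field K]

def sigma (ζ q a : K) (p : K × K × K) : K × K × K :=
  (ζ * p.1,
   q⁻¹ * p.2.1 + q⁻¹ * (q + 1) * a ^ 6 + q⁻¹ * (q ^ 5 + 1) * a ^ 2 * p.1,
   p.2.2 + 1 + (1 + ζ ^ 2) * a ^ 6 * p.1 ^ 2 + (1 + ζ ^ 3) * a ^ 2 * p.1 ^ 3)

theorem semiconj_normalize_sigma [CharP K 2] {ζ q : K} (a : K) (hq : q ^ 4 = ζ) (hq7 : q ^ 7 = 1) :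
    Semiconj (normalize a) (sigma ζ q a) (diagonalAut q) := by
  have hqinv : q⁻¹ = q ^ 6 := inv_eq_of_mul_eq_one_right (by grind)
  rintro ⟨t, x, y⟩
  simp only [normalize, sigma, diagonalAut, hqinv, ← hq, Prod.mk.injEq]
  grind

theorem OnSurface.sigma [CharP K 2] {ζ q a : K} (hq : q ^ 4 = ζ) (hq7 : q ^ 7 = 1)
    (ha : a ^ 7 = 1) {p : K × K × K} (hp : OnSurface a p) : OnSurface a (sigma ζ q a p) := by
  rw [onSurface_iff_onNormalSurface ha] at hp ⊢
  rw [semiconj_normalize_sigma a hq hq7 p]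
  exact hp.diagonalAut hq7

end E7A1Surface

open E7A1Surface

theorem E7A1_supersingular_order14_automorphism_general (k : Type*) [Field k]
    [CharP k 2]
    (ζ q a : k) (hζ7 : ζ ^ 7 = 1) (hζ1 : ζ ≠ 1) (hq : q ^ 4 = ζ) (ha : a ^ 7 = 1)
    (K : Type*) [Field K]
    [Algebra k K]
    (σ : K × K × K → K × K × K)
    (hσ : ∀ t x y : K, σ (t, x, y) =
      (algebraMap k K ζ * t,
       (algebraMap k K q)⁻¹ * x
         + (algebraMap k K q)⁻¹ * (algebraMap k K q + 1) * algebraMap k K a ^ 6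
         + (algebraMap k K q)⁻¹ * (algebraMap k K q ^ 5 + 1) * algebraMap k K a ^ 2 * t,
       y + 1 + (1 + algebraMap k K ζ ^ 2) * algebraMap k K a ^ 6 * t ^ 2
         + (1 + algebraMap k K ζ ^ 3) * algebraMap k K a ^ 2 * t ^ 3)) :
    (∀ t x y : K,
      y ^ 2 + y = t * x ^ 4 + (t + algebraMap k K a ^ 4) ^ 7 →
        (σ (t, x, y)).2.2 ^ 2 + (σ (t, x, y)).2.2 =
          (σ (t, x, y)).1 * (σ (t, x, y)).2.1 ^ 4
            + ((σ (t, x, y)).1 + algebraMap k K a ^ 4) ^ 7) ∧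
    σ^[14] = id ∧ σ^[7] ≠ id ∧ σ^[2] ≠ id := by
  set f := algebraMap k K
  have : CharP K 2 := charP_of_injective_algebraMap f.injective 2
  have hq7 : q ^ 7 = 1 :=
    CharTwo.eq_one_of_pow_four_eq_one (by rw [← pow_mul, mul_comm, pow_mul, hq, hζ7])
  have hQ7 : f q ^ 7 = 1 := by rw [← map_pow, hq7, map_one]
  have hA7 : f a ^ 7 = 1 := by rw [← map_pow, ha, map_one]
  have hq1 : q ≠ 1 := by rintro rfl; exact hζ1 (by rw [← hq, one_pow])
  have hQ1 : f q ≠ 1 := (map_ne_one_iff f f.injective).mpr hq1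
  obtain rfl : σ = sigma (f ζ) (f q) (f a) := funext fun p => hσ p.1 p.2.1 p.2.2
  have hζ : f q ^ 4 = f ζ := by rw [← map_pow, hq]
  have hconj := semiconj_normalize_sigma (f a) hζ hQ7
  have horder := hconj.iterate_eq_id_iff (normalize_involutive (f a)).bijective
  refine ⟨fun t x y h => OnSurface.sigma hζ hQ7 hA7 (p := (t, x, y)) h,
    (horder 14).2 (diagonalAut_iterate_fourteen hQ7),
    fun h => diagonalAut_iterate_seven_ne_id _ ((horder 7).1 h),
    fun h => diagonalAut_iterate_two_ne_id hQ7 hQ1 ((horder 2).1 h)⟩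

/-- Over an algebraically closed field `k` of characteristic 2, let `ζ` be a primitive
7th root of unity, `q = ζ^{1/4}` (i.e. `q⁴ = ζ`), and `a ∈ k` with `a⁷ = 1`. The
substitution `σ : (t,x,y) ↦ (ζt, q⁻¹x + q⁻¹(q+1)a⁶ + q⁻¹(q⁵+1)a²t,
y + 1 + (1+ζ²)a⁶t² + (1+ζ³)a²t³)` on the function field `k(t,x,y)` of the surface
`y² + y = tx⁴ + (t+a⁴)⁷` preserves the defining relation and has order 14. -/
theorem E7A1_supersingular_order14_automorphism (k : Type*) [Field k] [IsAlgClosed k]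
    [CharP k 2]
    (ζ q a : k) (hζ7 : ζ ^ 7 = 1) (hζ1 : ζ ≠ 1) (hq : q ^ 4 = ζ) (ha : a ^ 7 = 1)
    (K : Type*) [Field K] [Algebra (MvPolynomial (Fin 3) k) K]
    [IsFractionRing (MvPolynomial (Fin 3) k) K]
    [Algebra k K] [IsScalarTower k (MvPolynomial (Fin 3) k) K]
    (σ : K × K × K → K × K × K)
    (hσ : ∀ t x y : K, σ (t, x, y) =
      (algebraMap k K ζ * t,
       (algebraMap k K q)⁻¹ * x
         + (algebraMap k K q)⁻¹ * (algebraMap k K q + 1) * algebraMap k K a ^ 6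
         + (algebraMap k K q)⁻¹ * (algebraMap k K q ^ 5 + 1) * algebraMap k K a ^ 2 * t,
       y + 1 + (1 + algebraMap k K ζ ^ 2) * algebraMap k K a ^ 6 * t ^ 2
         + (1 + algebraMap k K ζ ^ 3) * algebraMap k K a ^ 2 * t ^ 3)) :
    (∀ t x y : K,
      y ^ 2 + y = t * x ^ 4 + (t + algebraMap k K a ^ 4) ^ 7 →
        (σ (t, x, y)).2.2 ^ 2 + (σ (t, x, y)).2.2 =
          (σ (t, x, y)).1 * (σ (t, x, y)).2.1 ^ 4
            + ((σ (t, x, y)).1 + algebraMap k K a ^ 4) ^ 7) ∧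
    σ^[14] = id ∧ σ^[7] ≠ id ∧ σ^[2] ≠ id :=
  E7A1_supersingular_order14_automorphism_general k ζ q a hζ7 hζ1 hq ha K σ hσ
end
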